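/- arXiv:2004.04656 — 5 statements merged into one kernel-verified Lean document; each statement's English description precedes it below -/
import Mathlib

section
/- Correctness of the path-join local-sensitivity algorithm: for a path join query under bag semantics, define the local sensitivity LS as the maximum over all i ∈ {1,…,m} and all pairs (b,c) ∈ Σ_{i-1} × Σ_i of max(δ⁺(b,c,i), δ⁻(b,c,i)), where δ⁺(b,c,i) is the increase of the output count caused by incrementing M_i b c by 1 and δ⁻(b,c,i) is the decrease caused by decrementing M_i b c by 1 when M_i b c ≥ 1 (and 0 when M_i b c = 0). Then LS = max_{1 ≤ i ≤ m} (max_{b ∈ Σ_{i-1}} In_i(b)) · (max_{c ∈ Σ_i} Out_i(c)). -/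
open Finset

/-- The output count (under bag semantics) of the path join query
`Q(A_0,…,A_m) :- R_1(A_0,A_1), …, R_m(A_{m-1},A_m)`, where `D i` is the domain `Σ_i`
and `M i a b` is the multiplicity of the tuple `(a,b)` in relation `R_{i+1}`. -/
def Qcount (m : ℕ) (D : ℕ → Type) [∀ i, Fintype (D i)]
    (M : (i : ℕ) → D i → D (i + 1) → ℕ) : ℕ :=
  ∑ a : (∀ j : Fin (m + 1), D j), ∏ i : Fin m, M i.val (a i.castSucc) (a i.succ)

/-- `InFn D M i b` is the "topjoin" quantity `In_{i+1}(b)` (1-based paper indexing):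
the number of partial join paths `(a_0,…,a_{i-1},b)` through relations `R_1,…,R_i`,
i.e. `Σ_{(a_0,…,a_{i-1})} ∏_{j<i} M j a_j a_{j+1}` evaluated with `a_i = b`. -/
def InFn (D : ℕ → Type) [∀ i, Fintype (D i)]
    (M : (i : ℕ) → D i → D (i + 1) → ℕ) (i : ℕ) (b : D i) : ℕ :=
  ∑ a : (∀ j : Fin i, D j), ∏ j : Fin i,
    M j.val (Fin.snoc (α := fun t : Fin (i + 1) => D t.val) a b j.castSucc)
      (Fin.snoc (α := fun t : Fin (i + 1) => D t.val) a b j.succ)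

/-- `OutFn D M i k c` is the "botjoin" quantity: the number of partial join paths
`(c, a_{i+1}, …, a_{i+k})` through the `k` relations `M i, M (i+1), …, M (i+k-1)`,
i.e. `Σ_{(a_{i+1},…,a_{i+k})} ∏_{j<k} M (i+j) a_{i+j} a_{i+j+1}` evaluated with `a_i = c`. -/
def OutFn (D : ℕ → Type) [∀ i, Fintype (D i)]
    (M : (i : ℕ) → D i → D (i + 1) → ℕ) (i k : ℕ) (c : D i) : ℕ :=
  ∑ b : (∀ j : Fin k, D (i + j.val + 1)), ∏ j : Fin k,
    M (i + j.val) (Fin.cons (α := fun t : Fin (k + 1) => D (i + t.val)) c b j.castSucc)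
      (Fin.cons (α := fun t : Fin (k + 1) => D (i + t.val)) c b j.succ)

/-- Insert one copy of the tuple `(b,c)` into relation `i` (0-based). -/
def bumpM (D : ℕ → Type) [∀ i, DecidableEq (D i)]
    (M : (i : ℕ) → D i → D (i + 1) → ℕ) (i : ℕ) (b : D i) (c : D (i + 1)) :
    (j : ℕ) → D j → D (j + 1) → ℕ :=
  Function.update M i (fun x y => if x = b ∧ y = c then M i x y + 1 else M i x y)

/-- Delete one copy of the tuple `(b,c)` from relation `i` (0-based). -/
def dropM (D : ℕ → Type) [∀ i, DecidableEq (D i)]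
    (M : (i : ℕ) → D i → D (i + 1) → ℕ) (i : ℕ) (b : D i) (c : D (i + 1)) :
    (j : ℕ) → D j → D (j + 1) → ℕ :=
  Function.update M i (fun x y => if x = b ∧ y = c then M i x y - 1 else M i x y)

/-!
Cutting every join path at the edge it uses in relation `i` writes the output count as
`Q(M) = Σ_{b,c} In_i(b) · M_i b c · Out_i(c)`, where `In_i` and `Out_i` do not involve `M_i`.
So `Q` is affine in each single entry `M_i b c`, with slope `In_i(b) · Out_i(c)`: inserting a
tuple raises `Q` by exactly the slope and deleting one lowers it by the slope, or by `0` if the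
tuple is absent. The maximum of the slopes over `(b,c)` factors as a product of two maxima.
-/

theorem Finset.sup_product_mul_eq_mul_sup {α β : Type*} (s : Finset α) (t : Finset β)
    (f : α → ℕ) (g : β → ℕ) :
    (s ×ˢ t).sup (fun p => f p.1 * g p.2) = s.sup f * t.sup g := by
  rw [Finset.sup_product_left, Finset.apply_sup_eq_sup_comp_of_linearOrder (· * t.sup g)
    (fun _ _ h => Nat.mul_le_mul_right _ h) (zero_mul _)]
  refine Finset.sup_congr rfl fun a _ => ?_
  exact (Finset.apply_sup_eq_sup_comp_of_linearOrder (f a * ·)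
    (fun _ _ h => Nat.mul_le_mul_left _ h) (mul_zero _)).symm

section Update

variable (D : ℕ → Type) [∀ i, DecidableEq (D i)] (M : (i : ℕ) → D i → D (i + 1) → ℕ)
  {i : ℕ} {b : D i} {c : D (i + 1)}

theorem dropM_of_eq_zero (h : M i b c = 0) : dropM D M i b c = M := by
  refine (congrArg (Function.update M i) ?_).trans (Function.update_eq_self i M)
  funext x y
  split_ifs with hxy
  · obtain ⟨rfl, rfl⟩ := hxy
    omega
  · rfl

theorem bumpM_dropM (h : M i b c ≠ 0) : bumpM D (dropM D M i b c) i b c = M := by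
  rw [bumpM, dropM, Function.update_idem, Function.update_self]
  refine (congrArg (Function.update M i) ?_).trans (Function.update_eq_self i M)
  funext x y
  split_ifs with hxy
  · obtain ⟨rfl, rfl⟩ := hxy
    omega
  · rfl

end Update

section Count

variable (D : ℕ → Type) [∀ i, Fintype (D i)] (M : (i : ℕ) → D i → D (i + 1) → ℕ)

theorem Qcount_eq_sum_InFn (m : ℕ) : Qcount m D M = ∑ b : D m, InFn D M m b := by
  rw [Qcount, ← Equiv.sum_comp (Fin.snocEquiv (fun j : Fin (m + 1) => D j.val)),
    Fintype.sum_prod_type]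
  rfl

theorem InFn_succ (i : ℕ) (c : D (i + 1)) :
    InFn D M (i + 1) c = ∑ b : D i, InFn D M i b * M i b c := by
  rw [InFn, ← Equiv.sum_comp (Fin.snocEquiv (fun j : Fin (i + 1) => D j.val)),
    Fintype.sum_prod_type]
  simp only [InFn, Finset.sum_mul]
  refine Finset.sum_congr rfl fun b _ => Finset.sum_congr rfl fun a _ => ?_
  rw [Fin.prod_univ_castSucc]
  congr 1
  · refine Finset.prod_congr rfl fun j _ => ?_
    simp only [Fin.snocEquiv, Equiv.coe_fn_mk, Fin.snoc_castSucc, Fin.succ_castSucc]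
    rfl
  · simp [Fin.snocEquiv, Fin.succ_last]

theorem OutFn_zero (i : ℕ) (c : D i) : OutFn D M i 0 c = 1 := by
  simp [OutFn]

theorem OutFn_succ (i k : ℕ) (c : D i) :
    OutFn D M i (k + 1) c = ∑ d : D (i + 1), M i c d * OutFn D M (i + 1) k d := by
  rw [OutFn, ← Equiv.sum_comp (Fin.consEquiv (fun j : Fin (k + 1) => D (i + j.val + 1))),
    Fintype.sum_prod_type]
  refine Finset.sum_congr rfl fun d _ => ?_
  simp only [Fin.consEquiv, Equiv.coe_fn_mk]
  unfold OutFn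
  rw [Finset.mul_sum]
  -- the types `D (i + (j + 1) + 1)` and `D (i + 1 + j + 1)` agree only propositionally
  let e := Equiv.piCongrRight fun j : Fin k =>
    Equiv.cast (congrArg D (by omega : i + (j.val + 1) + 1 = i + 1 + j.val + 1))
  refine Fintype.sum_equiv e _ _ fun a => ?_
  have hcons : ∀ t : Fin (k + 1),
      Fin.cons (α := fun t : Fin (k + 1) => D (i + t.val + 1)) d a t ≍
        Fin.cons (α := fun t : Fin (k + 1) => D (i + 1 + t.val)) d (e a) t :=
    Fin.cases HEq.rfl fun s => (cast_heq _ _).symm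
  rw [Fin.prod_univ_succ]
  congr 1
  refine Finset.prod_congr rfl fun j _ => ?_
  congr 1
  · rw [Fin.val_succ]
    omega
  · exact hcons j.castSucc
  · exact hcons j.succ

theorem Qcount_eq_sum_InFn_mul_OutFn {m i k : ℕ} (h : i + k = m) :
    Qcount m D M = ∑ b : D i, InFn D M i b * OutFn D M i k b := by
  induction k generalizing i with
  | zero =>
    subst h
    simp [OutFn_zero, Qcount_eq_sum_InFn]
  | succ k ih =>
    rw [ih (i := i + 1) (by omega)]
    simp only [InFn_succ, OutFn_succ, Finset.sum_mul, Finset.mul_sum]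
    rw [Finset.sum_comm]
    exact Finset.sum_congr rfl fun b _ => Finset.sum_congr rfl fun c _ => by ring

theorem Qcount_eq_sum_InFn_mul_mul_OutFn {m i k : ℕ} (h : i + 1 + k = m) :
    Qcount m D M = ∑ p : D i × D (i + 1),
      InFn D M i p.1 * M i p.1 p.2 * OutFn D M (i + 1) k p.2 := by
  rw [Qcount_eq_sum_InFn_mul_OutFn D M h, Fintype.sum_prod_type_right]
  simp only [InFn_succ, Finset.sum_mul]

theorem InFn_update_of_le {i j : ℕ} (hij : i ≤ j) (N : D j → D (j + 1) → ℕ) (b : D i) :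
    InFn D (Function.update M j N) i b = InFn D M i b := by
  refine Finset.sum_congr rfl fun a _ => Finset.prod_congr rfl fun t _ => ?_
  rw [Function.update_of_ne (by omega)]

theorem OutFn_update_of_lt {i j : ℕ} (hji : j < i) (N : D j → D (j + 1) → ℕ) (k : ℕ)
    (c : D i) : OutFn D (Function.update M j N) i k c = OutFn D M i k c := by
  refine Finset.sum_congr rfl fun a _ => Finset.prod_congr rfl fun t _ => ?_
  rw [Function.update_of_ne (by omega)]

theorem Qcount_update {m i k : ℕ} (h : i + 1 + k = m) (N : D i → D (i + 1) → ℕ) :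
    Qcount m D (Function.update M i N) = ∑ p : D i × D (i + 1),
      InFn D M i p.1 * N p.1 p.2 * OutFn D M (i + 1) k p.2 := by
  simp only [Qcount_eq_sum_InFn_mul_mul_OutFn D _ h, Function.update_self,
    InFn_update_of_le D M le_rfl, OutFn_update_of_lt D M (Nat.lt_add_one i)]

variable [∀ i, DecidableEq (D i)] {m i k : ℕ} (h : i + 1 + k = m) (b : D i) (c : D (i + 1))
include h

theorem Qcount_bumpM :
    Qcount m D (bumpM D M i b c) = Qcount m D M + InFn D M i b * OutFn D M (i + 1) k c := by
  have hM : Qcount m D M = ∑ p : D i × D (i + 1),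
      InFn D M i p.1 * M i p.1 p.2 * OutFn D M (i + 1) k p.2 := by
    simpa using Qcount_update D M h (M i)
  have hterm : ∀ p : D i × D (i + 1),
      InFn D M i p.1 * (if p.1 = b ∧ p.2 = c then M i p.1 p.2 + 1 else M i p.1 p.2)
          * OutFn D M (i + 1) k p.2
        = InFn D M i p.1 * M i p.1 p.2 * OutFn D M (i + 1) k p.2
          + if p = (b, c) then InFn D M i b * OutFn D M (i + 1) k c else 0 := by
    rintro ⟨x, y⟩
    by_cases hxy : x = b ∧ y = c
    · obtain ⟨rfl, rfl⟩ := hxy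
      simp only [and_self, if_true]
      ring
    · simp [hxy]
  rw [bumpM, Qcount_update D M h, hM, Finset.sum_congr rfl fun p _ => hterm p,
    Finset.sum_add_distrib, Fintype.sum_ite_eq']

theorem Qcount_sub_Qcount_dropM_le :
    Qcount m D M - Qcount m D (dropM D M i b c) ≤ InFn D M i b * OutFn D M (i + 1) k c := by
  by_cases hMbc : M i b c = 0
  · simp [dropM_of_eq_zero D M hMbc]
  · have hIn : InFn D (dropM D M i b c) i b = InFn D M i b := InFn_update_of_le D M le_rfl _ b
    have hOut : OutFn D (dropM D M i b c) (i + 1) k c = OutFn D M (i + 1) k c :=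
      OutFn_update_of_lt D M (Nat.lt_add_one i) _ k c
    have hbump := Qcount_bumpM D (dropM D M i b c) h b c
    rw [bumpM_dropM D M hMbc, hIn, hOut] at hbump
    omega

theorem max_Qcount_bumpM_sub_Qcount_dropM_eq :
    max (Qcount m D (bumpM D M i b c) - Qcount m D M) (Qcount m D M - Qcount m D (dropM D M i b c))
      = InFn D M i b * OutFn D M (i + 1) k c := by
  rw [Qcount_bumpM D M h, Nat.add_sub_cancel_left]
  exact max_eq_left (Qcount_sub_Qcount_dropM_le D M h b c)

end Count

theorem path_local_sensitivity_algorithm_correct_general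
    (m : ℕ) (D : ℕ → Type)
    [∀ i, Fintype (D i)] [∀ i, DecidableEq (D i)]
    (M : (i : ℕ) → D i → D (i + 1) → ℕ) :
    (Finset.univ.sup fun i : Fin m =>
        Finset.univ.sup fun bc : D i.val × D (i.val + 1) =>
          max (Qcount m D (bumpM D M i.val bc.1 bc.2) - Qcount m D M)
            (Qcount m D M - Qcount m D (dropM D M i.val bc.1 bc.2)))
      = Finset.univ.sup fun i : Fin m =>
          (Finset.univ.sup fun b : D i.val => InFn D M i.val b)
            * Finset.univ.sup fun c : D (i.val + 1) =>
                OutFn D M (i.val + 1) (m - (i.val + 1)) c := by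
  refine Finset.sup_congr rfl fun i _ => ?_
  have hi : i.val + 1 + (m - (i.val + 1)) = m := by omega
  simp only [max_Qcount_bumpM_sub_Qcount_dropM_eq D M hi]
  rw [← Finset.sup_product_mul_eq_mul_sup, Finset.univ_product_univ]

/-- correctness of the path-join local-sensitivity algorithm.  The local
sensitivity `LS` — the maximum over all relations `i` and all pairs `(b,c) ∈ Σ_{i-1}×Σ_i`
of `max(δ⁺(b,c,i), δ⁻(b,c,i))`, where `δ⁺` is the increase of the output count caused by
incrementing `M_i b c` and `δ⁻` the decrease caused by decrementing it (`0` when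
`M_i b c = 0`, which is what truncated `ℕ`-subtraction yields) — equals
`max_i (max_b In_i(b)) · (max_c Out_i(c))`. -/
theorem path_local_sensitivity_algorithm_correct
    (m : ℕ) (hm : 1 ≤ m) (D : ℕ → Type)
    [∀ i, Fintype (D i)] [∀ i, Nonempty (D i)] [∀ i, DecidableEq (D i)]
    (M : (i : ℕ) → D i → D (i + 1) → ℕ) :
    (Finset.univ.sup fun i : Fin m =>
        Finset.univ.sup fun bc : D i.val × D (i.val + 1) =>
          max (Qcount m D (bumpM D M i.val bc.1 bc.2) - Qcount m D M)
            (Qcount m D M - Qcount m D (dropM D M i.val bc.1 bc.2)))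
      = Finset.univ.sup fun i : Fin m =>
          (Finset.univ.sup fun b : D i.val => InFn D M i.val b)
            * Finset.univ.sup fun c : D (i.val + 1) =>
                OutFn D M (i.val + 1) (m - (i.val + 1)) c :=
  path_local_sensitivity_algorithm_correct_general m D M
end

section
/- Correctness of the representative-domain algorithm for local sensitivity: for a full conjunctive query without self-joins under bag semantics, define the local sensitivity LS(Q,D) as the maximum over all i ∈ {1,…,m} and all tuples t ∈ Π_{A ∈ 𝔸_i} V(A) of max(δ⁺(t,i), δ⁻(t,i)). Then LS(Q,D) equals the maximum of δ⁺(t,i) over all i ∈ {1,…,m} and all t ∈ RepDom_i, where the maximum over an empty collection is taken to be 0. -/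
open Finset

section
variable (m : ℕ) (A : Type) [Fintype A] [DecidableEq A] (V : A → Type)
  [∀ a, Fintype (V a)] [∀ a, DecidableEq (V a)]
  (S : Fin m → Finset A)
  (R : ∀ i : Fin m, (∀ a : {x // x ∈ S i}, V a.val) → ℕ)

/-- The output count (under bag semantics) of the full conjunctive query
`Q(𝔸) :- R_1(𝔸_1), …, R_m(𝔸_m)`: `Q(D) = Σ_{w ∈ Π_{A∈𝔸} V(A)} ∏_i R_i(w|_{𝔸_i})`. -/
def QC : ℕ :=
  ∑ w : (∀ a : A, V a), ∏ i : Fin m, R i fun a => w a.val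

/-- Insert one copy of the tuple `t` into relation `R_i`. -/
def insR (i : Fin m) (t : ∀ a : {x // x ∈ S i}, V a.val) :
    ∀ j : Fin m, (∀ a : {x // x ∈ S j}, V a.val) → ℕ :=
  Function.update R i fun s => if s = t then R i s + 1 else R i s

/-- Delete one copy of the tuple `t` from relation `R_i` (truncated at `0`). -/
def delR (i : Fin m) (t : ∀ a : {x // x ∈ S i}, V a.val) :
    ∀ j : Fin m, (∀ a : {x // x ∈ S j}, V a.val) → ℕ :=
  Function.update R i fun s => if s = t then R i s - 1 else R i s

/-- Upward tuple sensitivity `δ⁺(t,i)`: the increase of the output count caused by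
inserting `t` into `R_i`. -/
def deltaP (i : Fin m) (t : ∀ a : {x // x ∈ S i}, V a.val) : ℕ :=
  QC m A V S (insR m A V S R i t) - QC m A V S R

/-- Downward tuple sensitivity `δ⁻(t,i)`: the decrease of the output count caused by
deleting `t` from `R_i` (this is `0` when `R_i(t) = 0`). -/
def deltaM (i : Fin m) (t : ∀ a : {x // x ∈ S i}, V a.val) : ℕ :=
  QC m A V S R - QC m A V S (delR m A V S R i t)

end

section
variable (m : ℕ) (A : Type) [Fintype A] [DecidableEq A] (V : A → Type)
  [∀ a, Fintype (V a)] [∀ a, DecidableEq (V a)]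
  (S : Fin m → Finset A)
  (R : ∀ i : Fin m, (∀ a : {x // x ∈ S i}, V a.val) → ℕ)

/-- `ActDom_j(a)`: the active domain of attribute `a` in relation `R_j`, i.e. the set of
values `s(a)` over tuples `s` with `R_j(s) > 0`. -/
def ActDom (j : Fin m) (a : A) (haj : a ∈ S j) : Set (V a) :=
  { v | ∃ s : ∀ a' : {x // x ∈ S j}, V a'.val, 0 < R j s ∧ s ⟨a, haj⟩ = v }

/-- `RepDom_i`: the representative domain of relation `R_i`, i.e. the tuples `t` such that
for every attribute `a ∈ 𝔸_i` and every `j ≠ i` with `a ∈ 𝔸_j`, `t(a) ∈ ActDom_j(a)`. -/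
def RepDom (i : Fin m) : Set (∀ a : {x // x ∈ S i}, V a.val) :=
  { t | ∀ (a : A) (hai : a ∈ S i) (j : Fin m), j ≠ i → ∀ haj : a ∈ S j,
      t ⟨a, hai⟩ ∈ ActDom m A V S R j a haj }

end


section auxpp
variable (m : ℕ) (A : Type) [Fintype A] [DecidableEq A] (V : A → Type)
  [∀ a, Fintype (V a)] [∀ a, DecidableEq (V a)]
  (S : Fin m → Finset A)
  (R : ∀ i : Fin m, (∀ a : {x // x ∈ S i}, V a.val) → ℕ)

/-- Auxiliary quantity: `P_i(t) = Σ_{w : w|S_i = t} ∏_{j ≠ i} R_j(w|S_j)`. -/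
def PP (i : Fin m) (t : ∀ a : {x // x ∈ S i}, V a.val) : ℕ :=
  ∑ w : (∀ a : A, V a),
    (if (fun a : {x // x ∈ S i} => w a.val) = t then 1 else 0) *
      ∏ j ∈ Finset.univ.erase i, R j (fun a => w a.val)

lemma QC_insR (i : Fin m) (t : ∀ a : {x // x ∈ S i}, V a.val) :
    QC m A V S (insR m A V S R i t) = QC m A V S R + PP m A V S R i t := by
  unfold QC insR PP
  rw [← Finset.sum_add_distrib]
  refine Finset.sum_congr rfl fun w _ => ?_
  rw [← Finset.mul_prod_erase _ _ (Finset.mem_univ i),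
      ← Finset.mul_prod_erase _ (fun j => R j fun a => w a.val) (Finset.mem_univ i)]
  have h1 : ∀ j ∈ Finset.univ.erase i,
      (Function.update R i (fun s => if s = t then R i s + 1 else R i s)) j
        (fun a => w a.val) = R j (fun a => w a.val) := by
    intro j hj
    rw [Function.update_of_ne (Finset.mem_erase.1 hj).1]
  rw [Finset.prod_congr rfl h1, Function.update_self]
  by_cases h : (fun a : {x // x ∈ S i} => w a.val) = t <;> simp [h, add_mul]

lemma deltaP_eq (i : Fin m) (t : ∀ a : {x // x ∈ S i}, V a.val) :
    deltaP m A V S R i t = PP m A V S R i t := by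
  unfold deltaP
  rw [QC_insR]
  omega

lemma QC_le_delR (i : Fin m) (t : ∀ a : {x // x ∈ S i}, V a.val) :
    QC m A V S R ≤ QC m A V S (delR m A V S R i t) + PP m A V S R i t := by
  unfold QC delR PP
  rw [← Finset.sum_add_distrib]
  refine Finset.sum_le_sum fun w _ => ?_
  rw [← Finset.mul_prod_erase _ (fun j => R j fun a => w a.val) (Finset.mem_univ i),
      ← Finset.mul_prod_erase _
        (fun j => (Function.update R i (fun s => if s = t then R i s - 1 else R i s)) j
          fun a => w a.val) (Finset.mem_univ i)]
  have h1 : ∀ j ∈ Finset.univ.erase i,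
      (Function.update R i (fun s => if s = t then R i s - 1 else R i s)) j
        (fun a => w a.val) = R j (fun a => w a.val) := by
    intro j hj
    rw [Function.update_of_ne (Finset.mem_erase.1 hj).1]
  rw [Finset.prod_congr rfl h1, Function.update_self]
  by_cases h : (fun a : {x // x ∈ S i} => w a.val) = t
  · simp only [h, if_true, one_mul]
    calc R i t * (∏ x ∈ Finset.univ.erase i, R x fun a => w a.val)
        ≤ ((R i t - 1) + 1) * (∏ x ∈ Finset.univ.erase i, R x fun a => w a.val) :=
          Nat.mul_le_mul_right _ (by omega)
      _ = _ := by ring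
  · simp [h]

lemma deltaM_le_deltaP (i : Fin m) (t : ∀ a : {x // x ∈ S i}, V a.val) :
    deltaM m A V S R i t ≤ deltaP m A V S R i t := by
  rw [deltaP_eq]
  unfold deltaM
  have := QC_le_delR m A V S R i t
  omega

lemma PP_eq_zero (i : Fin m) (t : ∀ a : {x // x ∈ S i}, V a.val)
    (ht : t ∉ RepDom m A V S R i) : PP m A V S R i t = 0 := by
  unfold RepDom at ht
  simp only [Set.mem_setOf_eq] at ht
  push_neg at ht
  obtain ⟨a, hai, j, hji, haj, hna⟩ := ht
  unfold PP
  refine Finset.sum_eq_zero fun w _ => ?_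
  by_cases h : (fun a : {x // x ∈ S i} => w a.val) = t
  · rw [Finset.prod_eq_zero (Finset.mem_erase.2 ⟨hji, Finset.mem_univ j⟩), mul_zero]
    by_contra hR
    refine hna ⟨fun a' => w a'.val, Nat.pos_of_ne_zero hR, ?_⟩
    have := congrFun h ⟨a, hai⟩
    simpa using this
  · simp [h]

lemma deltaP_eq_zero (i : Fin m) (t : ∀ a : {x // x ∈ S i}, V a.val)
    (ht : t ∉ RepDom m A V S R i) : deltaP m A V S R i t = 0 := by
  rw [deltaP_eq, PP_eq_zero m A V S R i t ht]

end auxpp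

open Classical in
/-- correctness of the representative-domain algorithm for local
sensitivity.  The local sensitivity `LS(Q,D)` — the maximum over all relations `i` and
all tuples `t` of `max(δ⁺(t,i), δ⁻(t,i))` — equals the maximum of `δ⁺(t,i)` over all `i`
and all `t ∈ RepDom_i` (the maximum over an empty collection being `0`, as for
`Finset.sup` in `ℕ`). -/
theorem local_sensitivity_eq_max_over_repdom
    (m : ℕ) (A : Type) [Fintype A] [DecidableEq A] (V : A → Type)
    [∀ a, Fintype (V a)] [∀ a, DecidableEq (V a)] [∀ a, Nonempty (V a)]
    (S : Fin m → Finset A) (hcov : ∀ a : A, ∃ i : Fin m, a ∈ S i)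
    (R : ∀ i : Fin m, (∀ a : {x // x ∈ S i}, V a.val) → ℕ) :
    (Finset.univ.sup fun i : Fin m =>
        Finset.univ.sup fun t : ∀ a : {x // x ∈ S i}, V a.val =>
          max (deltaP m A V S R i t) (deltaM m A V S R i t))
      = Finset.univ.sup fun i : Fin m =>
          (Finset.univ.filter
              fun t : ∀ a : {x // x ∈ S i}, V a.val => t ∈ RepDom m A V S R i).sup
            fun t => deltaP m A V S R i t := by
  classical
  have step1 : ∀ (i : Fin m) (t : ∀ a : {x // x ∈ S i}, V a.val),
      max (deltaP m A V S R i t) (deltaM m A V S R i t) = deltaP m A V S R i t :=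
    fun i t => max_eq_left (deltaM_le_deltaP m A V S R i t)
  refine Finset.sup_congr rfl fun i _ => ?_
  simp only [step1]
  apply le_antisymm
  · refine Finset.sup_le fun t _ => ?_
    by_cases hrep : t ∈ RepDom m A V S R i
    · exact Finset.le_sup (Finset.mem_filter.2 ⟨Finset.mem_univ t, hrep⟩)
    · rw [deltaP_eq_zero m A V S R i t hrep]
      exact Nat.zero_le _
  · exact Finset.sup_mono (Finset.filter_subset _ _)
end

section
/- Core equivalence of the NP-hardness reduction: let φ = C_1 ∧ ⋯ ∧ C_s be a CNF formula over Boolean variables indexed by {1,…,ℓ}, where clause C_i depends only on a variable set Var_i ⊆ {1,…,ℓ}. In the bag-semantics full conjunctive query model, take 𝔸 = {1,…,ℓ}, V(A) = Bool for all A, m = s + 1 relations with 𝔸_i = Var_i and R_i(u) = 1 if the partial assignment u satisfies C_i and 0 otherwise (for i = 1,…,s), and 𝔸_{s+1} = 𝔸 with R_{s+1} identically 0. Define the local sensitivity LS(Q,D) as the maximum over all i ∈ {1,…,s+1} and all tuples t ∈ Π_{A ∈ 𝔸_i} V(A) of max(δ⁺(t,i), δ⁻(t,i)). Then LS(Q,D)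 > 0 if and only if φ is satisfiable. -/
open Finset

/-- core equivalence of the NP-hardness reduction.  Let
`φ = C_1 ∧ ⋯ ∧ C_s` be a CNF formula over Boolean variables indexed by `Fin ℓ`, where
clause `C_i` depends only on the variable set `Var i` (`Csat i` evaluates `C_i` on a
partial assignment of `Var i`).  Take `𝔸 = Fin ℓ`, `V(A) = Bool`, `m = s + 1` relations
with `𝔸_i = Var i` and `R_i(u) = 1` iff `u` satisfies `C_i` (for `i = 1,…,s`), and
`𝔸_{s+1} = 𝔸` with `R_{s+1} ≡ 0`.  With the local sensitivity `LS(Q,D)` defined as the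
maximum over all `i` and all tuples `t` of `max(δ⁺(t,i), δ⁻(t,i))`:
`LS(Q,D) > 0` iff `φ` is satisfiable. -/
theorem local_sensitivity_pos_iff_satisfiable
    (ℓ s : ℕ) (Var : Fin s → Finset (Fin ℓ))
    (Csat : ∀ i : Fin s, (∀ a : {x // x ∈ Var i}, Bool) → Bool)
    (S : Fin (s + 1) → Finset (Fin ℓ))
    (hS : ∀ i : Fin s, S i.castSucc = Var i)
    (hSlast : S (Fin.last s) = Finset.univ)
    (R : ∀ i : Fin (s + 1), (∀ a : {x // x ∈ S i}, Bool) → ℕ)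
    (hR : ∀ (i : Fin s) (u : ∀ a : {x // x ∈ S i.castSucc}, Bool),
        R i.castSucc u
          = if Csat i (fun a => u ⟨a.val, by rw [hS i]; exact a.property⟩) then 1 else 0)
    (hRlast : ∀ u : ∀ a : {x // x ∈ S (Fin.last s)}, Bool, R (Fin.last s) u = 0) :
    0 < (Finset.univ.sup fun i : Fin (s + 1) =>
          Finset.univ.sup fun t : ∀ a : {x // x ∈ S i}, Bool =>
            max (deltaP (s + 1) (Fin ℓ) (fun _ => Bool) S R i t)
              (deltaM (s + 1) (Fin ℓ) (fun _ => Bool) S R i t))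
      ↔ ∃ w : Fin ℓ → Bool, ∀ i : Fin s, Csat i (fun a => w a.val) := by
  classical
  have hQC : QC (s+1) (Fin ℓ) (fun _ => Bool) S R = 0 := by
    apply Finset.sum_eq_zero
    intro w _
    exact Finset.prod_eq_zero (Finset.mem_univ (Fin.last s)) (hRlast _)
  constructor
  · intro h
    rw [Finset.lt_sup_iff] at h
    obtain ⟨i, -, hi⟩ := h
    rw [Finset.lt_sup_iff] at hi
    obtain ⟨t, -, ht⟩ := hi
    rw [lt_max_iff] at ht
    have hdM : deltaM (s+1) (Fin ℓ) (fun _ => Bool) S R i t = 0 := by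
      unfold deltaM; omega
    have hdP : 0 < QC (s+1) (Fin ℓ) (fun _ => Bool) S (insR (s+1) (Fin ℓ) (fun _ => Bool) S R i t) := by
      rcases ht with h1 | h2
      · unfold deltaP at h1; omega
      · omega
    rcases Fin.eq_castSucc_or_eq_last i with ⟨j, rfl⟩ | rfl
    · exfalso
      have : QC (s+1) (Fin ℓ) (fun _ => Bool) S (insR (s+1) (Fin ℓ) (fun _ => Bool) S R j.castSucc t) = 0 := by
        apply Finset.sum_eq_zero
        intro w _
        apply Finset.prod_eq_zero (Finset.mem_univ (Fin.last s))
        have hne : Fin.last s ≠ j.castSucc := (Fin.castSucc_lt_last j).ne'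
        show (insR (s+1) (Fin ℓ) (fun _ => Bool) S R j.castSucc t) (Fin.last s) _ = 0
        unfold insR
        rw [Function.update_of_ne hne]
        exact hRlast _
      omega
    · -- i = last
      have : ∃ w : ∀ a : Fin ℓ, Bool,
          0 < ∏ k : Fin (s+1), (insR (s+1) (Fin ℓ) (fun _ => Bool) S R (Fin.last s) t) k
            (fun a => w a.val) := by
        by_contra hc
        push_neg at hc
        have : QC (s+1) (Fin ℓ) (fun _ => Bool) S (insR (s+1) (Fin ℓ) (fun _ => Bool) S R (Fin.last s) t) = 0 := by
          apply Finset.sum_eq_zero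
          intro w _
          exact Nat.le_zero.mp (hc w)
        omega
      obtain ⟨w, hw⟩ := this
      refine ⟨w, fun i' => ?_⟩
      have hfac : 0 < (insR (s+1) (Fin ℓ) (fun _ => Bool) S R (Fin.last s) t) i'.castSucc
          (fun a => w a.val) :=
        Nat.pos_of_ne_zero (Finset.prod_ne_zero_iff.mp hw.ne' i'.castSucc (Finset.mem_univ _))
      have hne : i'.castSucc ≠ Fin.last s := (Fin.castSucc_lt_last i').ne
      unfold insR at hfac
      rw [Function.update_of_ne hne, hR i'] at hfac
      by_contra hcs
      simp [hcs] at hfac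
  · rintro ⟨w, hw⟩
    set t : ∀ a : {x // x ∈ S (Fin.last s)}, Bool := fun a => w a.val with ht
    have hpos : 0 < deltaP (s+1) (Fin ℓ) (fun _ => Bool) S R (Fin.last s) t := by
      unfold deltaP
      rw [hQC, Nat.sub_zero]
      have : 0 < ∏ k : Fin (s+1), (insR (s+1) (Fin ℓ) (fun _ => Bool) S R (Fin.last s) t) k
          (fun a => w a.val) := by
        apply Finset.prod_pos
        intro k _
        rcases Fin.eq_castSucc_or_eq_last k with ⟨j, rfl⟩ | rfl
        · have hne : j.castSucc ≠ Fin.last s := (Fin.castSucc_lt_last j).ne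
          show 0 < (insR (s+1) (Fin ℓ) (fun _ => Bool) S R (Fin.last s) t) j.castSucc _
          unfold insR
          rw [Function.update_of_ne hne, hR j]
          simp [hw j]
        · show 0 < (insR (s+1) (Fin ℓ) (fun _ => Bool) S R (Fin.last s) t) (Fin.last s) _
          unfold insR
          rw [Function.update_self]
          have heq : (fun a : {x // x ∈ S (Fin.last s)} => w a.val) = t := rfl
          rw [if_pos heq]
          omega
      unfold QC
      exact lt_of_lt_of_le this (Finset.single_le_sum
        (f := fun w' : Fin ℓ → Bool => ∏ k : Fin (s+1),
          (insR (s+1) (Fin ℓ) (fun _ => Bool) S R (Fin.last s) t) k (fun a => w' a.val))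
        (fun _ _ => Nat.zero_le _) (Finset.mem_univ w))
    calc 0 < deltaP (s+1) (Fin ℓ) (fun _ => Bool) S R (Fin.last s) t := hpos
      _ ≤ max (deltaP (s+1) (Fin ℓ) (fun _ => Bool) S R (Fin.last s) t)
            (deltaM (s+1) (Fin ℓ) (fun _ => Bool) S R (Fin.last s) t) := le_max_left _ _
      _ ≤ Finset.univ.sup fun t' => max (deltaP (s+1) (Fin ℓ) (fun _ => Bool) S R (Fin.last s) t')
            (deltaM (s+1) (Fin ℓ) (fun _ => Bool) S R (Fin.last s) t') :=
          Finset.le_sup (f := fun t' => max (deltaP (s + 1) (Fin ℓ) (fun _ => Bool) S R (Fin.last s) t')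
            (deltaM (s + 1) (Fin ℓ) (fun _ => Bool) S R (Fin.last s) t')) (Finset.mem_univ t)
      _ ≤ _ := Finset.le_sup (f := fun i : Fin (s+1) => Finset.univ.sup fun t' =>
            max (deltaP (s + 1) (Fin ℓ) (fun _ => Bool) S R i t')
              (deltaM (s + 1) (Fin ℓ) (fun _ => Bool) S R i t'))
          (Finset.mem_univ (Fin.last s))
end

section
/- Correctness of the iterative botjoin computation (step I of the acyclic algorithm): in the join-tree model, for every vertex i and every u ∈ Π_{A ∈ S_i} V(A), ⊥_i(u) = Σ_{v ∈ Π_{A ∈ 𝔸_i} V(A), v|_{S_i} = u} R_i(v) · ∏_{c ∈ children(i)} ⊥_c(v|_{S_c}) (the product over children is empty, hence 1, when i is a leaf). -/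
open Finset
open scoped Classical

/-- `inSub p i j`: vertex `j` belongs to `T(i)`, the subtree rooted at `i`, where `p` is
the parent function of the rooted tree (iterating `p` from `j` reaches `i`). -/
def inSub {m : ℕ} (p : Fin m → Fin m) (i j : Fin m) : Prop :=
  ∃ k : ℕ, p^[k] j = i

/-- The separator `S_i = 𝔸_i ∩ 𝔸_{p(i)}` of a non-root vertex `i`; `S_r = ∅` for the
root `r`. -/
def sepAttr {m : ℕ} {A : Type} [DecidableEq A] (Atr : Fin m → Finset A)
    (p : Fin m → Fin m) (r : Fin m) (i : Fin m) : Finset A :=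
  if i = r then ∅ else Atr i ∩ Atr (p i)

/-- The attributes `⋃_{j ∈ T(i)} 𝔸_j` appearing in the subtree rooted at `i`. -/
noncomputable def subAttr {m : ℕ} {A : Type} [DecidableEq A]
    (Atr : Fin m → Finset A) (p : Fin m → Fin m) (i : Fin m) : Finset A :=
  (Finset.univ.filter fun j => inSub p i j).biUnion Atr

/-- The attributes `⋃_{j ∉ T(i)} 𝔸_j` appearing outside the subtree rooted at `i`. -/
noncomputable def topAttr {m : ℕ} {A : Type} [DecidableEq A]
    (Atr : Fin m → Finset A) (p : Fin m → Fin m) (i : Fin m) : Finset A :=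
  (Finset.univ.filter fun j => ¬ inSub p i j).biUnion Atr

/-- Restriction of a partial assignment on `B` to a partial assignment on `C`
(intended for `C ⊆ B`; outside `B` an arbitrary value is used). -/
noncomputable def restrAny {A : Type} (V : A → Type) [∀ a, Nonempty (V a)]
    {B C : Finset A} (w : ∀ a : {x // x ∈ B}, V a.val) : ∀ a : {x // x ∈ C}, V a.val :=
  fun a => if h : a.val ∈ B then w ⟨a.val, h⟩ else Classical.arbitrary _

/-- The botjoin `⊥_i : Π_{A ∈ S_i} V(A) → ℕ`:
`⊥_i(u) = Σ_{w on ⋃_{j ∈ T(i)} 𝔸_j, w|_{S_i} = u} ∏_{j ∈ T(i)} R_j(w|_{𝔸_j})`. -/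
noncomputable def botJ {m : ℕ} {A : Type} [Fintype A] [DecidableEq A]
    (V : A → Type) [∀ a, Fintype (V a)] [∀ a, Nonempty (V a)]
    (Atr : Fin m → Finset A) (p : Fin m → Fin m) (r : Fin m)
    (R : ∀ i : Fin m, (∀ a : {x // x ∈ Atr i}, V a.val) → ℕ)
    (i : Fin m) (u : ∀ a : {x // x ∈ sepAttr Atr p r i}, V a.val) : ℕ :=
  ∑ w : (∀ a : {x // x ∈ subAttr Atr p i}, V a.val),
    if restrAny V w = u then
      ∏ j ∈ Finset.univ.filter (fun j => inSub p i j), R j (restrAny V w)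
    else 0

/-- The topjoin `⊤_i : Π_{A ∈ S_i} V(A) → ℕ`:
`⊤_i(u) = Σ_{w on ⋃_{j ∉ T(i)} 𝔸_j, w|_{S_i} = u} ∏_{j ∉ T(i)} R_j(w|_{𝔸_j})`
(for the root `r`, `⊤_r` is constantly `1` on the empty assignment). -/
noncomputable def topJ {m : ℕ} {A : Type} [Fintype A] [DecidableEq A]
    (V : A → Type) [∀ a, Fintype (V a)] [∀ a, Nonempty (V a)]
    (Atr : Fin m → Finset A) (p : Fin m → Fin m) (r : Fin m)
    (R : ∀ i : Fin m, (∀ a : {x // x ∈ Atr i}, V a.val) → ℕ)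
    (i : Fin m) (u : ∀ a : {x // x ∈ sepAttr Atr p r i}, V a.val) : ℕ :=
  ∑ w : (∀ a : {x // x ∈ topAttr Atr p i}, V a.val),
    if restrAny V w = u then
      ∏ j ∈ Finset.univ.filter (fun j => ¬ inSub p i j), R j (restrAny V w)
    else 0


section Tree
variable {m : ℕ} {p : Fin m → Fin m} {r : Fin m}

lemma inSub_refl (i : Fin m) : inSub p i i := ⟨0, rfl⟩

lemma inSub_parent {c j i : Fin m} (hc : inSub p c j) (hpc : p c = i) : inSub p i j := by
  obtain ⟨k, hk⟩ := hc
  exact ⟨k + 1, by rw [Function.iterate_succ_apply', hk, hpc]⟩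

lemma no_cycle (hroot : p r = r) (hreach : ∀ i : Fin m, ∃ k : ℕ, p^[k] i = r)
    {i c : Fin m} (hcr : c ≠ r) (hpc : p c = i) : ¬ inSub p c i := by
  rintro ⟨k, hk⟩
  have hper : p^[k + 1] i = i := by
    rw [Function.iterate_succ_apply', hk, hpc]
  have hmul : ∀ n : ℕ, p^[n * (k + 1)] i = i := by
    intro n
    induction n with
    | zero => simp
    | succ n ih =>
      rw [Nat.succ_mul, Function.iterate_add_apply, hper, ih]
  obtain ⟨n₀, hn₀⟩ := hreach i
  have hir : i = r := by
    have h1 : p^[(n₀ + 1) * (k + 1)] i = i := hmul _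
    have h2 : p^[(n₀ + 1) * (k + 1)] i = r := by
      have hge : n₀ ≤ (n₀ + 1) * (k + 1) := by nlinarith
      obtain ⟨d, hd⟩ := Nat.exists_eq_add_of_le hge
      rw [hd, Nat.add_comm, Function.iterate_add_apply, hn₀,
        Function.iterate_fixed hroot]
    rw [← h1, h2]
  apply hcr
  rw [← hk, hir, Function.iterate_fixed hroot]

/-- every member of the subtree of `i` other than `i` is in the subtree of a child -/
lemma inSub_cases (hroot : p r = r) {i j : Fin m} (h : inSub p i j) :
    j = i ∨ ∃ c : Fin m, p c = i ∧ c ≠ r ∧ inSub p c j := by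
  have hex : ∃ k : ℕ, p^[k] j = i := h
  set k := Nat.find hex with hkdef
  have hk : p^[k] j = i := Nat.find_spec hex
  rcases Nat.eq_zero_or_pos k with h0 | hpos
  · left; rw [h0] at hk; exact hk
  · right
    obtain ⟨k', hk'⟩ : ∃ k', k = k' + 1 := ⟨k - 1, by omega⟩
    rw [hk'] at hk
    refine ⟨p^[k'] j, ?_, ?_, ⟨k', rfl⟩⟩
    · rw [← Function.iterate_succ_apply' p k' j, hk]
    · intro hcr
      have hir : i = r := by rw [← hk, Function.iterate_succ_apply', hcr, hroot]
      have : p^[k'] j = i := by rw [hcr, hir]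
      exact absurd this (Nat.find_min hex (by rw [← hkdef]; omega))

/-- subtrees of distinct children are disjoint -/
lemma child_subtree_disjoint (hroot : p r = r) (hreach : ∀ i : Fin m, ∃ k : ℕ, p^[k] i = r)
    {i c c' j : Fin m} (hc : p c = i) (hcr : c ≠ r) (hc' : p c' = i) (hcr' : c' ≠ r)
    (hne : c ≠ c') (h1 : inSub p c j) (h2 : inSub p c' j) : False := by
  obtain ⟨k1, hk1⟩ := h1
  obtain ⟨k2, hk2⟩ := h2
  rcases le_total k1 k2 with hle | hle
  · obtain ⟨d, rfl⟩ := Nat.exists_eq_add_of_le hle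
    rw [Nat.add_comm, Function.iterate_add_apply, hk1] at hk2
    rcases Nat.eq_zero_or_pos d with h0 | hpos
    · rw [h0] at hk2; exact hne (hk2.symm ▸ rfl)
    · obtain ⟨d', rfl⟩ : ∃ d', d = d' + 1 := ⟨d - 1, by omega⟩
      rw [Function.iterate_succ_apply, hc] at hk2
      exact no_cycle hroot hreach hcr' hc' ⟨d', hk2⟩
  · obtain ⟨d, rfl⟩ := Nat.exists_eq_add_of_le hle
    rw [Nat.add_comm, Function.iterate_add_apply, hk2] at hk1
    rcases Nat.eq_zero_or_pos d with h0 | hpos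
    · rw [h0] at hk1; exact hne (hk1 ▸ rfl)
    · obtain ⟨d', rfl⟩ : ∃ d', d = d' + 1 := ⟨d - 1, by omega⟩
      rw [Function.iterate_succ_apply, hc'] at hk1
      exact no_cycle hroot hreach hcr hc ⟨d', hk1⟩

end Tree

set_option linter.unusedSectionVars false
section Pi
variable {A : Type} [DecidableEq A] (V : A → Type)

/-- restriction of a full assignment to a `Finset` -/
def resF (B : Finset A) (g : ∀ a, V a) : ∀ a : {x // x ∈ B}, V a.val :=
  fun a => g a.val

/-- glue an assignment on `S` with one on `D \ S` to one on `D` -/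
noncomputable def glueF (D S : Finset A)
    (σ : ∀ a : {x // x ∈ S}, V a.val) (x : ∀ a : {x // x ∈ D \ S}, V a.val) :
    ∀ a : {x // x ∈ D}, V a.val :=
  fun a => if h : a.val ∈ S then σ ⟨a.val, h⟩
    else x ⟨a.val, Finset.mem_sdiff.mpr ⟨a.2, h⟩⟩

variable [∀ a, Nonempty (V a)]

lemma restr_res {S D : Finset A} (h : S ⊆ D) (g : ∀ a, V a) :
    (restrAny V (resF V D g) : ∀ a : {x // x ∈ S}, V a.val) = resF V S g :=
  funext fun a => dif_pos (h a.2)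

lemma restr_glue {D S : Finset A} (hSD : S ⊆ D)
    (σ : ∀ a : {x // x ∈ S}, V a.val) (x : ∀ a : {x // x ∈ D \ S}, V a.val) :
    (restrAny V (glueF V D S σ x) : ∀ a : {x // x ∈ S}, V a.val) = σ := by
  funext a
  have h1 : a.val ∈ D := hSD a.2
  have h2 : a.val ∈ S := a.2
  simp [restrAny, glueF, h1, h2]

variable [Fintype A] [∀ a, Fintype (V a)]

lemma sum_resF (B : Finset A) (f : (∀ a : {x // x ∈ B}, V a.val) → ℕ) :
    ∑ g : ∀ a, V a, f (resF V B g)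
      = Fintype.card (∀ a : {x // x ∉ B}, V a.val)
        * ∑ w : ∀ a : {x // x ∈ B}, V a.val, f w := by
  classical
  rw [← Equiv.sum_comp (Equiv.piEquivPiSubtypeProd (fun a => a ∈ B) V).symm
    (fun g => f (resF V B g)), Fintype.sum_prod_type]
  have hres : ∀ (x : ∀ a : {x // x ∈ B}, V a.val) (y : ∀ a : {x // x ∉ B}, V a.val),
      resF V B ((Equiv.piEquivPiSubtypeProd (fun a => a ∈ B) V).symm (x, y)) = x := by
    intro x y; funext a
    simp [resF, Equiv.piEquivPiSubtypeProd_symm_apply, a.2]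
  simp_rw [hres]
  simp [Finset.sum_const, Finset.mul_sum, mul_comm]

lemma glueEquiv (D S : Finset A) (hSD : S ⊆ D) :
    ∃ e : ((∀ a : {x // x ∈ S}, V a.val) × (∀ a : {x // x ∈ D \ S}, V a.val))
        ≃ (∀ a : {x // x ∈ D}, V a.val),
      ∀ q, e q = glueF V D S q.1 q.2 := by
  refine ⟨⟨fun q => glueF V D S q.1 q.2,
    fun w => (restrAny V w, fun a => w ⟨a.val, (Finset.mem_sdiff.mp a.2).1⟩), ?_, ?_⟩,
    fun q => rfl⟩
  · rintro ⟨σ, x⟩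
    refine Prod.ext (restr_glue V hSD σ x) ?_
    funext a
    have h2 : a.val ∉ S := (Finset.mem_sdiff.mp a.2).2
    simp [glueF, h2]
  · intro w
    funext a
    by_cases h : a.val ∈ S
    · have h1 : a.val ∈ D := hSD h
      simp [glueF, restrAny, h, h1]
    · simp [glueF, h]

lemma sum_ite_glue (D S : Finset A) (hSD : S ⊆ D)
    (σ : ∀ a : {x // x ∈ S}, V a.val)
    (P : (∀ a : {x // x ∈ D}, V a.val) → ℕ) :
    (∑ w : ∀ a : {x // x ∈ D}, V a.val, if restrAny V w = σ then P w else 0)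
      = ∑ x : ∀ a : {x // x ∈ D \ S}, V a.val, P (glueF V D S σ x) := by
  classical
  obtain ⟨e, he⟩ := glueEquiv V D S hSD
  rw [← Equiv.sum_comp e (fun w => if restrAny V w = σ then P w else 0)]
  simp_rw [he]
  rw [Fintype.sum_prod_type]
  have : ∀ (s : ∀ a : {x // x ∈ S}, V a.val) (x : ∀ a : {x // x ∈ D \ S}, V a.val),
      (restrAny V (glueF V D S s x) : ∀ a : {x // x ∈ S}, V a.val) = s :=
    fun s x => restr_glue V hSD s x
  simp_rw [this]
  rw [Finset.sum_comm]
  simp [Finset.sum_ite_eq' Finset.univ σ]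

end Pi

section Main
set_option maxHeartbeats 1000000
set_option linter.unusedSectionVars false
variable {m : ℕ} {A : Type} [Fintype A] [DecidableEq A] (V : A → Type)
  [∀ a, Fintype (V a)] [∀ a, Nonempty (V a)]
  (Atr : Fin m → Finset A) (p : Fin m → Fin m) (r : Fin m)
  (R : ∀ i : Fin m, (∀ a : {x // x ∈ Atr i}, V a.val) → ℕ)

lemma Atr_sub_subAttr {c j : Fin m} (hj : inSub p c j) :
    Atr j ⊆ subAttr Atr p c := fun a ha =>
  Finset.mem_biUnion.mpr ⟨j, Finset.mem_filter.mpr ⟨Finset.mem_univ _, hj⟩, ha⟩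

lemma sep_sub_Atr (c : Fin m) : sepAttr Atr p r c ⊆ Atr c := by
  unfold sepAttr; split
  · exact Finset.empty_subset _
  · exact Finset.inter_subset_left

lemma sep_sub_subAttr (c : Fin m) : sepAttr Atr p r c ⊆ subAttr Atr p c :=
  (sep_sub_Atr Atr p r c).trans (Atr_sub_subAttr Atr p (inSub_refl c))

lemma sum_mul_botJ (c : Fin m) (F : (∀ a, V a) → ℕ)
    (hF : ∀ g g' : ∀ a, V a,
      (∀ a, a ∉ subAttr Atr p c \ sepAttr Atr p r c → g a = g' a) → F g = F g') :
    ∑ g : ∀ a, V a, F g * botJ V Atr p r R c (resF V (sepAttr Atr p r c) g)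
    = Fintype.card (∀ a : {x // x ∈ subAttr Atr p c \ sepAttr Atr p r c}, V a.val)
      * ∑ g : ∀ a, V a, F g
          * ∏ j ∈ Finset.univ.filter (fun j => inSub p c j), R j (resF V (Atr j) g) := by
  classical
  set Dc := subAttr Atr p c with hDc
  set Sc := sepAttr Atr p r c with hSc
  have hSD : Sc ⊆ Dc := sep_sub_subAttr Atr p r c
  have hAj : ∀ j, inSub p c j → Atr j ⊆ Dc := fun j hj => Atr_sub_subAttr Atr p hj
  set q : A → Prop := fun a => a ∈ Dc \ Sc with hq
  set e := Equiv.piEquivPiSubtypeProd q V with he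
  have hnq : ∀ a : {x // x ∈ Sc}, ¬ q a.val := by
    intro a hqa
    exact (Finset.mem_sdiff.mp hqa).2 a.2
  -- σy
  set σy : (∀ a : {x // ¬ q x}, V a.val) → (∀ a : {x // x ∈ Sc}, V a.val) :=
    fun y a => y ⟨a.val, hnq a⟩ with hσy
  have f1 : ∀ x x' y, (∀ G : (∀ a, V a) → ℕ,
      (∀ g g', (∀ a, a ∉ Dc \ Sc → g a = g' a) → G g = G g') →
        G (e.symm (x, y)) = G (e.symm (x', y))) := by
    intro x x' y G hG
    apply hG
    intro a ha
    have : ¬ q a := ha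
    simp [he, Equiv.piEquivPiSubtypeProd_symm_apply, this]
  have f2 : ∀ x y, resF V Sc (e.symm (x, y)) = σy y := by
    intro x y; funext a
    simp [resF, he, Equiv.piEquivPiSubtypeProd_symm_apply, hnq a, hσy]
  have f3 : ∀ (j : Fin m), inSub p c j → ∀ x y,
      resF V (Atr j) (e.symm (x, y))
        = (restrAny V (glueF V Dc Sc (σy y) x) : ∀ a : {x // x ∈ Atr j}, V a.val) := by
    intro j hj x y; funext a
    have haD : a.val ∈ Dc := hAj j hj a.2
    by_cases h : a.val ∈ Sc
    · have : ¬ q a.val := fun hqa => (Finset.mem_sdiff.mp hqa).2 h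
      simp [resF, he, Equiv.piEquivPiSubtypeProd_symm_apply, restrAny, glueF, haD, h, this,
        hσy]
    · have : q a.val := Finset.mem_sdiff.mpr ⟨haD, h⟩
      simp [resF, he, Equiv.piEquivPiSubtypeProd_symm_apply, restrAny, glueF, haD, h, this]
  have f4 : ∀ y, ∑ x : ∀ a : {x // q x}, V a.val,
      (∏ j ∈ Finset.univ.filter (fun j => inSub p c j), R j (resF V (Atr j) (e.symm (x, y))))
      = botJ V Atr p r R c (σy y) := by
    intro y
    rw [botJ, sum_ite_glue V Dc Sc hSD (σy y)]
    apply Finset.sum_congr rfl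
    intro x _
    apply Finset.prod_congr rfl
    intro j hj
    rw [f3 j (Finset.mem_filter.mp hj).2 x y]
  -- now compute both sides
  have x₀ : ∀ a : {x // q x}, V a.val := Classical.arbitrary _
  have lhs_eq : ∑ g : ∀ a, V a, F g * botJ V Atr p r R c (resF V Sc g)
      = Fintype.card (∀ a : {x // q x}, V a.val)
        * ∑ y, F (e.symm (x₀, y)) * botJ V Atr p r R c (σy y) := by
    rw [← Equiv.sum_comp e.symm
      (fun g => F g * botJ V Atr p r R c (resF V Sc g)), Fintype.sum_prod_type]
    have : ∀ x y, F (e.symm (x, y)) * botJ V Atr p r R c (resF V Sc (e.symm (x, y)))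
        = F (e.symm (x₀, y)) * botJ V Atr p r R c (σy y) := by
      intro x y
      rw [f2, f1 x x₀ y F hF]
    simp_rw [this]
    rw [Finset.sum_const]
    simp [Finset.card_univ, smul_eq_mul]
  have rhs_eq : ∑ g : ∀ a, V a, F g
        * ∏ j ∈ Finset.univ.filter (fun j => inSub p c j), R j (resF V (Atr j) g)
      = ∑ y, F (e.symm (x₀, y)) * botJ V Atr p r R c (σy y) := by
    rw [← Equiv.sum_comp e.symm (fun g => F g
      * ∏ j ∈ Finset.univ.filter (fun j => inSub p c j), R j (resF V (Atr j) g)),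
      Fintype.sum_prod_type, Finset.sum_comm]
    apply Finset.sum_congr rfl
    intro y _
    have : ∀ x, F (e.symm (x, y)) = F (e.symm (x₀, y)) := fun x => f1 x x₀ y F hF
    simp_rw [this]
    rw [← Finset.mul_sum, f4 y]
  rw [lhs_eq, rhs_eq]


lemma RI_child (hroot : p r = r) (hreach : ∀ i : Fin m, ∃ k : ℕ, p^[k] i = r)
    (hRI : ∀ a : A, ∃ t : Fin m, ∀ i : Fin m, a ∈ Atr i →
        ∃ k : ℕ, p^[k] i = t ∧ ∀ l ≤ k, a ∈ Atr (p^[l] i))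
    {i c j : Fin m} {a : A} (hpc : p c = i) (hcr : c ≠ r) (hj : inSub p c j)
    (ha : a ∈ Atr j) (hai : a ∈ Atr i) : a ∈ Atr c := by
  obtain ⟨t, ht⟩ := hRI a
  obtain ⟨k, hkt, hpath⟩ := ht j ha
  obtain ⟨k'', hk''t, -⟩ := ht i hai
  obtain ⟨kj, hkj⟩ := hj
  rcases le_or_gt kj k with hle | hlt
  · have := hpath kj hle; rwa [hkj] at this
  · exfalso
    have h1 : p^[kj - k] t = c := by
      rw [← hkt, ← Function.iterate_add_apply]
      have hh : kj - k + k = kj := by omega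
      rw [hh, hkj]
    have h2 : p^[kj - k + k''] i = c := by
      rw [Function.iterate_add_apply, hk''t, h1]
    exact no_cycle hroot hreach hcr hpc ⟨_, h2⟩

lemma RI_two (hroot : p r = r) (hreach : ∀ i : Fin m, ∃ k : ℕ, p^[k] i = r)
    (hRI : ∀ a : A, ∃ t : Fin m, ∀ i : Fin m, a ∈ Atr i →
        ∃ k : ℕ, p^[k] i = t ∧ ∀ l ≤ k, a ∈ Atr (p^[l] i))
    {i c c' j j' : Fin m} {a : A} (hpc : p c = i) (hcr : c ≠ r)
    (hpc' : p c' = i) (hcr' : c' ≠ r) (hne : c ≠ c')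
    (hj : inSub p c j) (ha : a ∈ Atr j) (hj' : inSub p c' j') (ha' : a ∈ Atr j') :
    a ∈ Atr i := by
  obtain ⟨t, ht⟩ := hRI a
  obtain ⟨k, hkt, hpath⟩ := ht j ha
  obtain ⟨k', hkt', hpath'⟩ := ht j' ha'
  obtain ⟨kc, hkc⟩ := hj
  obtain ⟨kc', hkc'⟩ := hj'
  rcases le_or_gt (kc+1) k with h | h
  · have := hpath (kc+1) h
    rwa [Function.iterate_succ_apply', hkc, hpc] at this
  · rcases le_or_gt (kc'+1) k' with h' | h'
    · have := hpath' (kc'+1) h'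
      rwa [Function.iterate_succ_apply', hkc', hpc'] at this
    · exfalso
      have h1 : inSub p c t := by
        refine ⟨kc - k, ?_⟩
        rw [← hkt, ← Function.iterate_add_apply]
        have hh : kc - k + k = kc := by omega
        rw [hh, hkc]
      have h2 : inSub p c' t := by
        refine ⟨kc' - k', ?_⟩
        rw [← hkt', ← Function.iterate_add_apply]
        have hh : kc' - k' + k' = kc' := by omega
        rw [hh, hkc']
      exact child_subtree_disjoint hroot hreach hpc hcr hpc' hcr' hne h1 h2

end Main

set_option maxHeartbeats 3000000 in
/-- correctness of the iterative botjoin computation (step I of the acyclic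
algorithm).  In the join-tree model, for every vertex `i` and every `u` on `S_i`,
`⊥_i(u) = Σ_{v on 𝔸_i, v|_{S_i} = u} R_i(v) ⬝ ∏_{c ∈ children(i)} ⊥_c(v|_{S_c})`
(children of `i` are the non-root vertices with parent `i`; the product is empty, hence
`1`, when `i` is a leaf). -/
theorem botjoin_iterative_recurrence
    (m : ℕ) (A : Type) [Fintype A] [DecidableEq A] (V : A → Type)
    [∀ a, Fintype (V a)] [∀ a, DecidableEq (V a)] [∀ a, Nonempty (V a)]
    (Atr : Fin m → Finset A) (hcov : ∀ a : A, ∃ i : Fin m, a ∈ Atr i)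
    (p : Fin m → Fin m) (r : Fin m)
    (hroot : p r = r)
    (hreach : ∀ i : Fin m, ∃ k : ℕ, p^[k] i = r)
    (hRI : ∀ a : A, ∃ t : Fin m, ∀ i : Fin m, a ∈ Atr i →
        ∃ k : ℕ, p^[k] i = t ∧ ∀ l ≤ k, a ∈ Atr (p^[l] i))
    (R : ∀ i : Fin m, (∀ a : {x // x ∈ Atr i}, V a.val) → ℕ)
    (i : Fin m) (u : ∀ a : {x // x ∈ sepAttr Atr p r i}, V a.val) :
    botJ V Atr p r R i u
      = ∑ v : (∀ a : {x // x ∈ Atr i}, V a.val),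
          if restrAny V v = u then
            R i v * ∏ c ∈ Finset.univ.filter (fun c => p c = i ∧ c ≠ r),
              botJ V Atr p r R c (restrAny V v)
          else 0 := by
  classical
  set C := Finset.univ.filter (fun c => p c = i ∧ c ≠ r) with hC
  have hCmem : ∀ c, c ∈ C ↔ p c = i ∧ c ≠ r := by intro c; simp [hC]
  have hSciA : ∀ c ∈ C, sepAttr Atr p r c ⊆ Atr i := by
    intro c hc
    obtain ⟨hpc, hcr⟩ := (hCmem c).mp hc
    intro a ha
    rw [sepAttr, if_neg hcr] at ha
    rw [← hpc]
    exact (Finset.mem_inter.mp ha).2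
  have hG7 : ∀ c ∈ C, ∀ a ∈ subAttr Atr p c, a ∈ Atr i → a ∈ sepAttr Atr p r c := by
    intro c hc a haD hai
    obtain ⟨hpc, hcr⟩ := (hCmem c).mp hc
    obtain ⟨j, hjmem, haj⟩ := Finset.mem_biUnion.mp haD
    have hj : inSub p c j := (Finset.mem_filter.mp hjmem).2
    have hac : a ∈ Atr c := RI_child Atr p r hroot hreach hRI hpc hcr hj haj hai
    rw [sepAttr, if_neg hcr]
    exact Finset.mem_inter.mpr ⟨hac, by rw [hpc]; exact hai⟩
  have hG8 : ∀ c ∈ C, ∀ c' ∈ C, c ≠ c' →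
      ∀ a, a ∈ subAttr Atr p c → a ∈ subAttr Atr p c' → a ∈ Atr i := by
    intro c hc c' hc' hne a h1 h2
    obtain ⟨hpc, hcr⟩ := (hCmem c).mp hc
    obtain ⟨hpc', hcr'⟩ := (hCmem c').mp hc'
    obtain ⟨j, hjmem, haj⟩ := Finset.mem_biUnion.mp h1
    obtain ⟨j', hjmem', haj'⟩ := Finset.mem_biUnion.mp h2
    exact RI_two Atr p r hroot hreach hRI hpc hcr hpc' hcr' hne
      (Finset.mem_filter.mp hjmem).2 haj (Finset.mem_filter.mp hjmem').2 haj'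
  have hDsub : ∀ c ∈ C, subAttr Atr p c ⊆ subAttr Atr p i := by
    intro c hc a ha
    obtain ⟨hpc, hcr⟩ := (hCmem c).mp hc
    obtain ⟨j, hjmem, haj⟩ := Finset.mem_biUnion.mp ha
    exact Atr_sub_subAttr Atr p (inSub_parent (Finset.mem_filter.mp hjmem).2 hpc) haj
  have hAiD : Atr i ⊆ subAttr Atr p i := Atr_sub_subAttr Atr p (inSub_refl i)
  have hTs : Finset.univ.filter (fun j => inSub p i j)
      = insert i (C.biUnion (fun c => Finset.univ.filter (fun j => inSub p c j))) := by
    ext j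
    constructor
    · intro hj
      have h : inSub p i j := (Finset.mem_filter.mp hj).2
      rcases inSub_cases hroot h with h' | ⟨c, hpc, hcr, hsub⟩
      · exact Finset.mem_insert.mpr (Or.inl h')
      · refine Finset.mem_insert.mpr (Or.inr (Finset.mem_biUnion.mpr
          ⟨c, (hCmem c).mpr ⟨hpc, hcr⟩, ?_⟩))
        exact Finset.mem_filter.mpr ⟨Finset.mem_univ _, hsub⟩
    · intro hj
      rcases Finset.mem_insert.mp hj with rfl | hj'
      · exact Finset.mem_filter.mpr ⟨Finset.mem_univ _, inSub_refl j⟩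
      · obtain ⟨c, hcmem, hjc⟩ := Finset.mem_biUnion.mp hj'
        obtain ⟨hpc, hcr⟩ := (hCmem c).mp hcmem
        exact Finset.mem_filter.mpr ⟨Finset.mem_univ _,
          inSub_parent (Finset.mem_filter.mp hjc).2 hpc⟩
  have hiC : i ∉ C.biUnion (fun c => Finset.univ.filter (fun j => inSub p c j)) := by
    intro hmem
    obtain ⟨c, hcmem, hic⟩ := Finset.mem_biUnion.mp hmem
    obtain ⟨hpc, hcr⟩ := (hCmem c).mp hcmem
    exact no_cycle hroot hreach hcr hpc (Finset.mem_filter.mp hic).2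
  have hdisjTs : (C : Set (Fin m)).PairwiseDisjoint
      (fun c => Finset.univ.filter (fun j => inSub p c j)) := by
    intro c hc c' hc' hne
    obtain ⟨hpc, hcr⟩ := (hCmem c).mp (Finset.mem_coe.mp hc)
    obtain ⟨hpc', hcr'⟩ := (hCmem c').mp (Finset.mem_coe.mp hc')
    refine Finset.disjoint_left.mpr ?_
    intro j h1 h2
    exact child_subtree_disjoint hroot hreach hpc hcr hpc' hcr' hne
      (Finset.mem_filter.mp h1).2 (Finset.mem_filter.mp h2).2
  -- abbreviations
  set Φ : (∀ a, V a) → ℕ := fun g =>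
    if resF V (sepAttr Atr p r i) g = u then
      ∏ j ∈ Finset.univ.filter (fun j => inSub p i j), R j (resF V (Atr j) g)
    else 0 with hΦ
  set base : (∀ a, V a) → ℕ := fun g =>
    if resF V (sepAttr Atr p r i) g = u then R i (resF V (Atr i) g) else 0 with hbase
  set P : Fin m → (∀ a, V a) → ℕ := fun c g =>
    ∏ j ∈ Finset.univ.filter (fun j => inSub p c j), R j (resF V (Atr j) g) with hP
  set bj : Fin m → (∀ a, V a) → ℕ := fun c g =>
    botJ V Atr p r R c (resF V (sepAttr Atr p r c) g) with hbj
  set K : Fin m → ℕ := fun c =>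
    Fintype.card (∀ a : {x // x ∈ subAttr Atr p c \ sepAttr Atr p r c}, V a.val) with hK
  have hSiA : sepAttr Atr p r i ⊆ Atr i := sep_sub_Atr Atr p r i
  have hPhi : ∀ g, Φ g = base g * ∏ c ∈ C, P c g := by
    intro g
    simp only [hΦ, hbase, hP]
    rw [hTs, Finset.prod_insert hiC, Finset.prod_biUnion hdisjTs]
    split_ifs with h
    · rfl
    · simp
  -- the iterative replacement
  have key : ∀ s : Finset (Fin m), s ⊆ C →
      (∏ c ∈ s, K c) * ∑ g : ∀ a, V a, Φ g
        = ∑ g : ∀ a, V a, base g * (∏ c ∈ C \ s, P c g) * ∏ c ∈ s, bj c g := by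
    intro s
    induction s using Finset.induction_on with
    | empty =>
      intro _
      simp only [Finset.prod_empty, one_mul, Finset.sdiff_empty, mul_one]
      exact Finset.sum_congr rfl fun g _ => hPhi g
    | @insert c0 s hc0 ih =>
      intro hsub
      have hc0C : c0 ∈ C := hsub (Finset.mem_insert_self c0 s)
      have hsS : s ⊆ C := fun x hx => hsub (Finset.mem_insert_of_mem hx)
      have hc0Cs : c0 ∈ C \ s := Finset.mem_sdiff.mpr ⟨hc0C, hc0⟩
      have hCs : insert c0 (C \ insert c0 s) = C \ s := by
        rw [Finset.sdiff_insert, Finset.insert_erase hc0Cs]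
      have hc0notin : c0 ∉ C \ insert c0 s := fun h =>
        (Finset.mem_sdiff.mp h).2 (Finset.mem_insert_self _ _)
      set F : (∀ a, V a) → ℕ := fun g =>
        base g * (∏ c ∈ C \ insert c0 s, P c g) * ∏ c ∈ s, bj c g with hF
      have hAiok : ∀ a ∈ Atr i, a ∉ subAttr Atr p c0 \ sepAttr Atr p r c0 := by
        intro a hai hmem
        obtain ⟨hD, hS⟩ := Finset.mem_sdiff.mp hmem
        exact hS (hG7 c0 hc0C a hD hai)
      have hok : ∀ c ∈ C, c ≠ c0 →
          ∀ a ∈ subAttr Atr p c, a ∉ subAttr Atr p c0 \ sepAttr Atr p r c0 := by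
        intro c hc hne a ha hmem
        obtain ⟨hD, hS⟩ := Finset.mem_sdiff.mp hmem
        exact hS (hG7 c0 hc0C a hD (hG8 c hc c0 hc0C hne a ha hD))
      have hFinv : ∀ g g' : ∀ a, V a,
          (∀ a, a ∉ subAttr Atr p c0 \ sepAttr Atr p r c0 → g a = g' a) → F g = F g' := by
        intro g g' hgg'
        have hres : ∀ B : Finset A,
            (∀ a ∈ B, a ∉ subAttr Atr p c0 \ sepAttr Atr p r c0) →
            resF V B g = resF V B g' := by
          intro B hB; funext a; exact hgg' a.val (hB a.val a.2)
        have hb : base g = base g' := by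
          simp only [hbase]
          rw [hres (sepAttr Atr p r i) (fun a ha => hAiok a (hSiA ha)),
            hres (Atr i) hAiok]
        have hp : ∀ c ∈ C \ insert c0 s, P c g = P c g' := by
          intro c hc
          have hcC : c ∈ C := (Finset.mem_sdiff.mp hc).1
          have hne : c ≠ c0 := fun h =>
            (Finset.mem_sdiff.mp hc).2 (h ▸ Finset.mem_insert_self c0 s)
          simp only [hP]
          refine Finset.prod_congr rfl fun j hj => ?_
          rw [hres (Atr j) (fun a ha => hok c hcC hne a
            (Atr_sub_subAttr Atr p (Finset.mem_filter.mp hj).2 ha))]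
        have hbj2 : ∀ c ∈ s, bj c g = bj c g' := by
          intro c hc
          have hcC : c ∈ C := hsS hc
          simp only [hbj]
          rw [hres (sepAttr Atr p r c) (fun a ha => hAiok a (hSciA c hcC ha))]
        simp only [hF]
        rw [hb, Finset.prod_congr rfl hp, Finset.prod_congr rfl hbj2]
      calc (∏ c ∈ insert c0 s, K c) * ∑ g : ∀ a, V a, Φ g
          = K c0 * ((∏ c ∈ s, K c) * ∑ g : ∀ a, V a, Φ g) := by
            rw [Finset.prod_insert hc0, mul_assoc]
        _ = K c0 * ∑ g : ∀ a, V a,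
              base g * (∏ c ∈ C \ s, P c g) * ∏ c ∈ s, bj c g := by rw [ih hsS]
        _ = K c0 * ∑ g : ∀ a, V a, F g * P c0 g := by
            congr 1
            apply Finset.sum_congr rfl
            intro g _
            rw [← hCs, Finset.prod_insert hc0notin]
            simp only [hF]
            ring
        _ = ∑ g : ∀ a, V a, F g * bj c0 g := by
            simp only [hK, hP, hbj]
            exact (sum_mul_botJ V Atr p r R c0 F hFinv).symm
        _ = ∑ g : ∀ a, V a,
              base g * (∏ c ∈ C \ insert c0 s, P c g) * ∏ c ∈ insert c0 s, bj c g := by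
            apply Finset.sum_congr rfl
            intro g _
            rw [Finset.prod_insert hc0]
            simp only [hF]
            ring
  -- lift of the left-hand side
  have hQ1 : ∑ g : ∀ a, V a, Φ g
      = Fintype.card (∀ a : {x // x ∉ subAttr Atr p i}, V a.val)
        * botJ V Atr p r R i u := by
    rw [botJ]
    refine Eq.trans ?_ (sum_resF V (subAttr Atr p i) _)
    apply Finset.sum_congr rfl
    intro g _
    simp only [hΦ]
    rw [restr_res V (sep_sub_subAttr Atr p r i) g]
    by_cases h : resF V (sepAttr Atr p r i) g = u
    · rw [if_pos h, if_pos h]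
      apply Finset.prod_congr rfl
      intro j hj
      rw [restr_res V (Atr_sub_subAttr Atr p (Finset.mem_filter.mp hj).2) g]
    · rw [if_neg h, if_neg h]
  -- lift of the right-hand side
  have hQ2 : ∑ g : ∀ a, V a, base g * ∏ c ∈ C, bj c g
      = Fintype.card (∀ a : {x // x ∉ Atr i}, V a.val)
        * ∑ v : ∀ a : {x // x ∈ Atr i}, V a.val,
            if restrAny V v = u then
              R i v * ∏ c ∈ C, botJ V Atr p r R c (restrAny V v)
            else 0 := by
    refine Eq.trans ?_ (sum_resF V (Atr i) _)
    apply Finset.sum_congr rfl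
    intro g _
    simp only [hbase, hbj]
    rw [restr_res V hSiA g]
    by_cases h : resF V (sepAttr Atr p r i) g = u
    · rw [if_pos h, if_pos h]
      congr 1
      apply Finset.prod_congr rfl
      intro c hc
      rw [restr_res V (hSciA c hc) g]
    · rw [if_neg h, if_neg h, zero_mul]
  have hkeyC := key C (Finset.Subset.refl C)
  rw [Finset.sdiff_self] at hkeyC
  simp only [Finset.prod_empty, mul_one] at hkeyC
  -- cardinalities
  have hcard : ∀ B : Finset A,
      Fintype.card (∀ a : {x // x ∈ B}, V a.val) = ∏ a ∈ B, Fintype.card (V a) := by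
    intro B
    rw [Fintype.card_pi]
    exact (Finset.prod_subtype B (fun x => Iff.rfl) (fun a => Fintype.card (V a))).symm
  have hcardc : ∀ B : Finset A,
      Fintype.card (∀ a : {x // x ∉ B}, V a.val) = ∏ a ∈ Bᶜ, Fintype.card (V a) := by
    intro B
    rw [Fintype.card_pi]
    exact (Finset.prod_subtype Bᶜ (fun x => Finset.mem_compl) (fun a => Fintype.card (V a))).symm
  have hsetid : (Atr i)ᶜ = (subAttr Atr p i)ᶜ
      ∪ C.biUnion (fun c => subAttr Atr p c \ sepAttr Atr p r c) := by
    ext a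
    simp only [Finset.mem_compl, Finset.mem_union, Finset.mem_biUnion, Finset.mem_sdiff]
    constructor
    · intro ha
      by_cases hD : a ∈ subAttr Atr p i
      · right
        obtain ⟨j, hjmem, haj⟩ := Finset.mem_biUnion.mp hD
        have hj : inSub p i j := (Finset.mem_filter.mp hjmem).2
        rcases inSub_cases hroot hj with rfl | ⟨c, hpc, hcr, hsub⟩
        · exact absurd haj ha
        · have hcC : c ∈ C := (hCmem c).mpr ⟨hpc, hcr⟩
          exact ⟨c, hcC, Atr_sub_subAttr Atr p hsub haj,
            fun hS => ha (hSciA c hcC hS)⟩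
      · exact Or.inl hD
    · rintro (hD | ⟨c, hcmem, hDc, hSc⟩)
      · exact fun ha => hD (hAiD ha)
      · exact fun ha => hSc (hG7 c hcmem a hDc ha)
  have hdisj1 : Disjoint ((subAttr Atr p i)ᶜ)
      (C.biUnion (fun c => subAttr Atr p c \ sepAttr Atr p r c)) := by
    refine Finset.disjoint_left.mpr ?_
    intro a h1 h2
    obtain ⟨c, hcmem, h3⟩ := Finset.mem_biUnion.mp h2
    exact (Finset.mem_compl.mp h1) (hDsub c hcmem (Finset.mem_sdiff.mp h3).1)
  have hdisj2 : (C : Set (Fin m)).PairwiseDisjoint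
      (fun c => subAttr Atr p c \ sepAttr Atr p r c) := by
    intro c hc c' hc' hne
    refine Finset.disjoint_left.mpr ?_
    intro a h1 h2
    obtain ⟨hD, hS⟩ := Finset.mem_sdiff.mp h1
    obtain ⟨hD', hS'⟩ := Finset.mem_sdiff.mp h2
    exact hS (hG7 c (Finset.mem_coe.mp hc) a hD
      (hG8 c (Finset.mem_coe.mp hc) c' (Finset.mem_coe.mp hc') hne a hD hD'))
  have hcardeq : Fintype.card (∀ a : {x // x ∉ Atr i}, V a.val)
      = (∏ c ∈ C, K c)
        * Fintype.card (∀ a : {x // x ∉ subAttr Atr p i}, V a.val) := by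
    rw [hcardc, hcardc, hsetid, Finset.prod_union hdisj1, Finset.prod_biUnion hdisj2,
      mul_comm]
    congr 1
    apply Finset.prod_congr rfl
    intro c _
    simp only [hK]
    exact (hcard _).symm
  have hpos : 0 < (∏ c ∈ C, K c)
      * Fintype.card (∀ a : {x // x ∉ subAttr Atr p i}, V a.val) := by
    apply Nat.mul_pos
    · apply Finset.prod_pos
      intro c _
      simp only [hK]
      exact Fintype.card_pos
    · exact Fintype.card_pos
  refine Nat.eq_of_mul_eq_mul_left hpos ?_
  calc (∏ c ∈ C, K c) * Fintype.card (∀ a : {x // x ∉ subAttr Atr p i}, V a.val)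
        * botJ V Atr p r R i u
      = (∏ c ∈ C, K c) * ∑ g : ∀ a, V a, Φ g := by rw [hQ1]; ring
    _ = ∑ g : ∀ a, V a, base g * ∏ c ∈ C, bj c g := hkeyC
    _ = Fintype.card (∀ a : {x // x ∉ Atr i}, V a.val)
          * ∑ v : ∀ a : {x // x ∈ Atr i}, V a.val,
              if restrAny V v = u then
                R i v * ∏ c ∈ C, botJ V Atr p r R c (restrAny V v)
              else 0 := hQ2
    _ = (∏ c ∈ C, K c) * Fintype.card (∀ a : {x // x ∉ subAttr Atr p i}, V a.val)
          * ∑ v : ∀ a : {x // x ∈ Atr i}, V a.val,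
              if restrAny V v = u then
                R i v * ∏ c ∈ C, botJ V Atr p r R c (restrAny V v)
              else 0 := by rw [hcardeq]
end

section
/- Bounded global sensitivity of the truncated query: in the bag-semantics full conjunctive query model, designate R_1 as the private relation and note that δ⁺(t,1) depends only on R_2,…,R_m. For τ ∈ ℕ define the truncation T_τ(D) as the database obtained by replacing R_1 with R_1', where R_1'(t) = R_1(t) if δ⁺(t,1) ≤ τ and R_1'(t) = 0 otherwise, leaving R_2,…,R_m unchanged. Then for any two databases D and D' that agree on R_2,…,R_m and whose first relations differ by exactly one copy of a single tuple (i.e., R_1' = R_1 with R_1(t₀) replaced by R_1(t₀)+1 for some tuple t₀), the truncated output counts differ by at most τ: |Q(T_τ(D)) − Q(T_τ(D'))| ≤ τ. -/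
open Finset

/-- `TSens`-truncation at threshold `τ` of the designated private relation `i₀`: tuples
`t` of `R_{i₀}` whose (upward) tuple sensitivity `δ⁺(t,i₀)` exceeds `τ` are removed
(their multiplicity is set to `0`); all other relations are unchanged.  (Note that
`δ⁺(t,i₀)` depends only on the relations other than `R_{i₀}`.) -/
def truncR (m : ℕ) (A : Type) [Fintype A] [DecidableEq A] (V : A → Type)
    [∀ a, Fintype (V a)] [∀ a, DecidableEq (V a)]
    (S : Fin m → Finset A)
    (R : ∀ i : Fin m, (∀ a : {x // x ∈ S i}, V a.val) → ℕ)
    (τ : ℕ) (i₀ : Fin m) :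
    ∀ j : Fin m, (∀ a : {x // x ∈ S j}, V a.val) → ℕ :=
  Function.update R i₀ fun t => if deltaP m A V S R i₀ t ≤ τ then R i₀ t else 0

section AuxLemmas
variable (m : ℕ) (A : Type) [Fintype A] [DecidableEq A] (V : A → Type)
  [∀ a, Fintype (V a)] [∀ a, DecidableEq (V a)]
  (S : Fin m → Finset A)

lemma QC_eq (R : ∀ i : Fin m, (∀ a : {x // x ∈ S i}, V a.val) → ℕ) (i : Fin m) :
    QC m A V S R = ∑ w : (∀ a : A, V a),
      R i (fun a => w a.val) * ∏ j ∈ Finset.univ.erase i, R j (fun a => w a.val) := by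
  unfold QC
  refine Finset.sum_congr rfl fun w _ => ?_
  exact (Finset.mul_prod_erase Finset.univ _ (Finset.mem_univ i)).symm

lemma deltaP_eq_s15 (R : ∀ i : Fin m, (∀ a : {x // x ∈ S i}, V a.val) → ℕ)
    (i : Fin m) (t : ∀ a : {x // x ∈ S i}, V a.val) :
    deltaP m A V S R i t = ∑ w : (∀ a : A, V a),
      if (fun a : {x // x ∈ S i} => w a.val) = t then
        ∏ j ∈ Finset.univ.erase i, R j (fun a => w a.val) else 0 := by
  unfold deltaP
  rw [QC_eq m A V S (insR m A V S R i t) i, QC_eq m A V S R i]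
  have h : ∀ w : (∀ a : A, V a),
      insR m A V S R i t i (fun a => w a.val) *
        ∏ j ∈ Finset.univ.erase i, insR m A V S R i t j (fun a => w a.val)
      = R i (fun a => w a.val) * ∏ j ∈ Finset.univ.erase i, R j (fun a => w a.val)
        + (if (fun a : {x // x ∈ S i} => w a.val) = t then
            ∏ j ∈ Finset.univ.erase i, R j (fun a => w a.val) else 0) := by
    intro w
    have hprod : ∏ j ∈ Finset.univ.erase i, insR m A V S R i t j (fun a => w a.val)
        = ∏ j ∈ Finset.univ.erase i, R j (fun a => w a.val) := by
      refine Finset.prod_congr rfl fun j hj => ?_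
      rw [insR, Function.update_of_ne (Finset.mem_erase.1 hj).1]
    rw [hprod, insR, Function.update_self]
    split <;> ring
  simp only [h]
  rw [Finset.sum_add_distrib, Nat.add_sub_cancel_left]

lemma deltaP_congr (R R' : ∀ i : Fin m, (∀ a : {x // x ∈ S i}, V a.val) → ℕ)
    (i : Fin m) (hsame : ∀ j : Fin m, j ≠ i → R' j = R j)
    (t : ∀ a : {x // x ∈ S i}, V a.val) :
    deltaP m A V S R' i t = deltaP m A V S R i t := by
  rw [deltaP_eq_s15, deltaP_eq_s15]
  refine Finset.sum_congr rfl fun w _ => ?_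
  split
  · exact Finset.prod_congr rfl fun j hj => by rw [hsame j (Finset.mem_erase.1 hj).1]
  · rfl


lemma trunc_sens (i₀ : Fin m) (τ : ℕ)
    (R R' : ∀ i : Fin m, (∀ a : {x // x ∈ S i}, V a.val) → ℕ)
    (t₀ : ∀ a : {x // x ∈ S i₀}, V a.val)
    (hsame : ∀ j : Fin m, j ≠ i₀ → R' j = R j)
    (hdiff : R' i₀ = fun s => if s = t₀ then R i₀ s + 1 else R i₀ s) :
    |(QC m A V S (truncR m A V S R' τ i₀) : ℤ)
        - (QC m A V S (truncR m A V S R τ i₀) : ℤ)| ≤ (τ : ℤ) := by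
  set T := truncR m A V S R τ i₀ with hT
  set T' := truncR m A V S R' τ i₀ with hT'
  have hToff : ∀ j : Fin m, j ≠ i₀ → T j = R j := fun j hj => Function.update_of_ne hj _ _
  have hT'off : ∀ j : Fin m, j ≠ i₀ → T' j = R j := fun j hj => by
    rw [hT', truncR, Function.update_of_ne hj, hsame j hj]
  have hdP : deltaP m A V S R' i₀ = deltaP m A V S R i₀ := by
    funext t; exact deltaP_congr m A V S R R' i₀ hsame t
  have hTi : T i₀ = fun t => if deltaP m A V S R i₀ t ≤ τ then R i₀ t else 0 :=
    Function.update_self _ _ _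
  have hT'i : T' i₀ = fun t =>
      if deltaP m A V S R i₀ t ≤ τ then (if t = t₀ then R i₀ t + 1 else R i₀ t) else 0 := by
    rw [hT', truncR, Function.update_self, hdP, hdiff]
  rw [QC_eq m A V S T' i₀, QC_eq m A V S T i₀]
  have key : ((∑ w : (∀ a : A, V a),
        T' i₀ (fun a => w a.val) * ∏ j ∈ Finset.univ.erase i₀, T' j (fun a => w a.val) : ℕ) : ℤ)
      - ((∑ w : (∀ a : A, V a),
        T i₀ (fun a => w a.val) * ∏ j ∈ Finset.univ.erase i₀, T j (fun a => w a.val) : ℕ) : ℤ)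
      = ∑ w : (∀ a : A, V a),
        (if deltaP m A V S R i₀ ((fun a : {x // x ∈ S i₀} => w a.val)) ≤ τ ∧
            (fun a : {x // x ∈ S i₀} => w a.val) = t₀ then 1 else 0) *
          ((∏ j ∈ Finset.univ.erase i₀, T j (fun a => w a.val) : ℕ) : ℤ) := by
    push_cast
    rw [← Finset.sum_sub_distrib]
    refine Finset.sum_congr rfl fun w _ => ?_
    have hPZ : ∏ j ∈ Finset.univ.erase i₀, ((T' j fun a => w a.val : ℕ) : ℤ)
        = ∏ j ∈ Finset.univ.erase i₀, ((T j fun a => w a.val : ℕ) : ℤ) := by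
      refine Finset.prod_congr rfl fun j hj => ?_
      rw [hT'off j (Finset.mem_erase.1 hj).1, hToff j (Finset.mem_erase.1 hj).1]
    rw [hPZ, ← sub_mul]
    congr 1
    rw [hTi, hT'i]
    by_cases h2 : (fun a : {x // x ∈ S i₀} => w a.val) = t₀
    · subst h2
      by_cases h1 : deltaP m A V S R i₀ (fun a : {x // x ∈ S i₀} => w a.val) ≤ τ <;>
        simp [h1]
    · simp [h2]
  rw [key]
  have hnn : (0 : ℤ) ≤ ∑ w : (∀ a : A, V a),
      (if deltaP m A V S R i₀ ((fun a : {x // x ∈ S i₀} => w a.val)) ≤ τ ∧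
          (fun a : {x // x ∈ S i₀} => w a.val) = t₀ then 1 else 0) *
        ((∏ j ∈ Finset.univ.erase i₀, T j (fun a => w a.val) : ℕ) : ℤ) := by
    refine Finset.sum_nonneg fun w _ => mul_nonneg ?_ (Int.natCast_nonneg _)
    split <;> norm_num
  rw [abs_of_nonneg hnn]
  by_cases hτ : deltaP m A V S R i₀ t₀ ≤ τ
  · calc (∑ w : (∀ a : A, V a),
        (if deltaP m A V S R i₀ ((fun a : {x // x ∈ S i₀} => w a.val)) ≤ τ ∧
            (fun a : {x // x ∈ S i₀} => w a.val) = t₀ then 1 else 0) *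
          ((∏ j ∈ Finset.univ.erase i₀, T j (fun a => w a.val) : ℕ) : ℤ))
        ≤ ∑ w : (∀ a : A, V a),
          (if (fun a : {x // x ∈ S i₀} => w a.val) = t₀ then
            ((∏ j ∈ Finset.univ.erase i₀, R j (fun a => w a.val) : ℕ) : ℤ) else 0) := by
          refine Finset.sum_le_sum fun w _ => ?_
          by_cases h2 : (fun a : {x // x ∈ S i₀} => w a.val) = t₀
          · rw [if_pos ⟨by rw [h2]; exact hτ, h2⟩, if_pos h2, one_mul]
            refine le_of_eq ?_
            norm_cast
            exact Finset.prod_congr rfl fun j hj => by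
              rw [hToff j (Finset.mem_erase.1 hj).1]
          · simp [h2]
      _ ≤ (τ : ℤ) := by
          have hcast : ((deltaP m A V S R i₀ t₀ : ℕ) : ℤ)
              = ∑ w : (∀ a : A, V a),
              (if (fun a : {x // x ∈ S i₀} => w a.val) = t₀ then
                ((∏ j ∈ Finset.univ.erase i₀, R j (fun a => w a.val) : ℕ) : ℤ) else 0) := by
            rw [deltaP_eq_s15 m A V S R i₀ t₀]
            push_cast [apply_ite (fun n : ℕ => (n : ℤ))]
            rfl
          rw [← hcast]
          exact_mod_cast hτ
  · have hz : ∀ w : (∀ a : A, V a),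
        (if deltaP m A V S R i₀ ((fun a : {x // x ∈ S i₀} => w a.val)) ≤ τ ∧
            (fun a : {x // x ∈ S i₀} => w a.val) = t₀ then (1:ℤ) else 0) *
          ((∏ j ∈ Finset.univ.erase i₀, T j (fun a => w a.val) : ℕ) : ℤ) = 0 := by
      intro w
      by_cases h2 : (fun a : {x // x ∈ S i₀} => w a.val) = t₀
      · rw [if_neg, zero_mul]
        rw [h2]; exact fun h => hτ h.1
      · simp [h2]
    simp only [hz, Finset.sum_const, smul_zero]
    positivity

end AuxLemmas

/-- bounded global sensitivity of the truncated query.  Designating the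
first relation (index `⟨0, hm⟩`) as the private relation: for any two databases `R`, `R'`
that agree on all the other relations and whose first relations differ by exactly one
copy of a single tuple `t₀` (`R'_1 = R_1` with `R_1(t₀)` replaced by `R_1(t₀) + 1`), the
output counts of the `τ`-truncated databases differ by at most `τ`. -/
theorem truncated_query_bounded_global_sensitivity
    (m : ℕ) (hm : 0 < m) (A : Type) [Fintype A] [DecidableEq A] (V : A → Type)
    [∀ a, Fintype (V a)] [∀ a, DecidableEq (V a)] [∀ a, Nonempty (V a)]
    (S : Fin m → Finset A) (hcov : ∀ a : A, ∃ i : Fin m, a ∈ S i)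
    (τ : ℕ)
    (R R' : ∀ i : Fin m, (∀ a : {x // x ∈ S i}, V a.val) → ℕ)
    (t₀ : ∀ a : {x // x ∈ S ⟨0, hm⟩}, V a.val)
    (hsame : ∀ j : Fin m, j ≠ ⟨0, hm⟩ → R' j = R j)
    (hdiff : R' ⟨0, hm⟩ = fun s => if s = t₀ then R ⟨0, hm⟩ s + 1 else R ⟨0, hm⟩ s) :
    |(QC m A V S (truncR m A V S R' τ ⟨0, hm⟩) : ℤ)
        - (QC m A V S (truncR m A V S R τ ⟨0, hm⟩) : ℤ)| ≤ (τ : ℤ) := by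
  exact trunc_sens m A V S ⟨0, hm⟩ τ R R' t₀ hsame hdiff
end
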